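/- Let Ω ⊂ ℝ^d be a measurable set of finite positive measure, let Ψ : Ω → ℝ be integrable, let L ∈ (0,1), and let a₁ = 𝟙_{ω*} where ω* = {x ∈ Ω : Ψ(x) > μ*} for some μ* ∈ ℝ with |ω*| = L|Ω|. Suppose there exists M > 0 such that for all δ > 0, the Lebesgue measure of {x ∈ Ω : |Ψ(x) − μ*| < δ} is at most M·δ. Then for every measurable a : Ω → [0,1] with ∫_Ω a = L|Ω|, one has ∫_Ω (a − a₁)·Ψ ≤ −(1/(4M))·‖a − a₁‖²_{L¹(Ω)}. -/

import Mathlib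

open MeasureTheory Set

/-! With `g = a - 𝟙_{ω*}`, the constraint `∫ g = 0` lets one replace `Ψ` by `Ψ - μ*`, and the
bathtub sign pattern (`g ≤ 0` where `Ψ > μ*`, `g ≥ 0` elsewhere) turns `∫ g Ψ` into
`-∫ |g| |Ψ - μ*|`. As `|g| ≤ 1`, pointwise `|g| |Ψ - μ*| ≥ δ (|g| - 𝟙_{|Ψ - μ*| < δ})`, so the band
condition gives `∫ |g| |Ψ - μ*| ≥ δ (‖g‖₁ - M δ)`, which equals `‖g‖₁² / (4M)` at
`δ = ‖g‖₁ / (2M)`. -/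

section BathtubQuantitative

variable {α : Type*}

theorem abs_sub_indicator_le_one {a : ℝ} (ha : a ∈ Icc (0 : ℝ) 1) (s : Set α) (x : α) :
    |a - s.indicator (fun _ => (1 : ℝ)) x| ≤ 1 := by
  simpa using abs_sub_le_of_le_of_le ha.1 ha.2 (s.indicator_nonneg (fun _ _ => zero_le_one) x)
    (s.indicator_le_self' (fun _ _ => zero_le_one) x)

theorem sub_indicator_mul_sub_eq_neg_abs_mul_abs {a : ℝ} {Ψ : α → ℝ} {c : ℝ} {x : α}
    (ha : a ∈ Icc (0 : ℝ) 1) :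
    (a - {y | c < Ψ y}.indicator (fun _ => (1 : ℝ)) x) * (Ψ x - c) =
      -(|a - {y | c < Ψ y}.indicator (fun _ => (1 : ℝ)) x| * |Ψ x - c|) := by
  obtain ⟨ha0, ha1⟩ := ha
  by_cases hx : c < Ψ x
  · rw [indicator_of_mem (show x ∈ {y | c < Ψ y} from hx), abs_of_nonpos (by linarith),
      abs_of_pos (by linarith)]
    ring
  · rw [indicator_of_notMem (show x ∉ {y | c < Ψ y} from hx), sub_zero, abs_of_nonneg ha0,
      abs_of_nonpos (by linarith)]
    ring

variable [MeasurableSpace α] {μ : Measure α} [IsFiniteMeasure μ]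

theorem mul_sub_measureReal_le_integral_mul {f h : α → ℝ} (hf : AEStronglyMeasurable f μ)
    (hf0 : ∀ x, 0 ≤ f x) (h0 : ∀ x, 0 ≤ h x) (h1 : ∀ x, h x ≤ 1) (hh : Integrable h μ)
    (hhf : Integrable (fun x => h x * f x) μ) (δ : ℝ) :
    δ * (∫ x, h x ∂μ - μ.real {x | f x < δ}) ≤ ∫ x, h x * f x ∂μ := by
  set t := {x | f x < δ}
  have ht : NullMeasurableSet t μ := hf.nullMeasurableSet_lt aestronglyMeasurable_const
  have hind : Integrable (t.indicator fun _ => (1 : ℝ)) μ := (integrable_const 1).indicator₀ ht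
  have hpointwise : ∀ x, δ * (h x - t.indicator (fun _ => (1 : ℝ)) x) ≤ h x * f x := by
    intro x
    by_cases hx : f x < δ
    · rw [indicator_of_mem (show x ∈ t from hx)]
      nlinarith [h1 x, h0 x, hf0 x]
    · rw [indicator_of_notMem (show x ∉ t from hx)]
      nlinarith [h0 x]
  calc δ * (∫ x, h x ∂μ - μ.real t)
      = ∫ x, δ * (h x - t.indicator (fun _ => (1 : ℝ)) x) ∂μ := by
        rw [integral_const_mul, integral_sub hh hind, integral_indicator₀ ht, setIntegral_const,
          smul_eq_mul, mul_one]
    _ ≤ ∫ x, h x * f x ∂μ := integral_mono ((hh.sub hind).const_mul δ) hhf hpointwise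

theorem sq_div_le_integral_mul_of_measure_lt_le {f h : α → ℝ} {M : ℝ} (hM : 0 < M)
    (hf : AEStronglyMeasurable f μ) (hf0 : ∀ x, 0 ≤ f x) (h0 : ∀ x, 0 ≤ h x)
    (h1 : ∀ x, h x ≤ 1) (hh : Integrable h μ) (hhf : Integrable (fun x => h x * f x) μ)
    (hband : ∀ δ : ℝ, 0 < δ → μ {x | f x < δ} ≤ ENNReal.ofReal (M * δ)) :
    (∫ x, h x ∂μ) ^ 2 / (4 * M) ≤ ∫ x, h x * f x ∂μ := by
  set T := ∫ x, h x ∂μ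
  have hT0 : 0 ≤ T := integral_nonneg h0
  rcases hT0.eq_or_lt with hT | hT
  · rw [← hT]
    simpa using integral_nonneg fun x => mul_nonneg (h0 x) (hf0 x)
  set δ := T / (2 * M) with hδ_def
  have hδ : 0 < δ := by positivity
  have hmeas : μ.real {x | f x < δ} ≤ M * δ :=
    ENNReal.toReal_le_of_le_ofReal (by positivity) (hband δ hδ)
  calc T ^ 2 / (4 * M) = δ * (T - M * δ) := by rw [hδ_def]; field_simp; ring
    _ ≤ δ * (T - μ.real {x | f x < δ}) := by gcongr
    _ ≤ ∫ x, h x * f x ∂μ := mul_sub_measureReal_le_integral_mul hf hf0 h0 h1 hh hhf δ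

theorem integral_sub_indicator_mul_le {Ψ a : α → ℝ} {c M : ℝ} (hΨ : Integrable Ψ μ)
    (ha : AEStronglyMeasurable a μ) (ha01 : ∀ x, a x ∈ Icc (0 : ℝ) 1)
    (hint : ∫ x, a x ∂μ = μ.real {x | c < Ψ x}) (hM : 0 < M)
    (hband : ∀ δ : ℝ, 0 < δ → μ {x | |Ψ x - c| < δ} ≤ ENNReal.ofReal (M * δ)) :
    ∫ x, (a x - {x | c < Ψ x}.indicator (fun _ => (1 : ℝ)) x) * Ψ x ∂μ ≤
      -(1 / (4 * M)) * (∫ x, |a x - {x | c < Ψ x}.indicator (fun _ => (1 : ℝ)) x| ∂μ) ^ 2 := by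
  set s := {x | c < Ψ x}
  set g := fun x => a x - s.indicator (fun _ => (1 : ℝ)) x
  have hs : NullMeasurableSet s μ :=
    aestronglyMeasurable_const.nullMeasurableSet_lt hΨ.aestronglyMeasurable
  have hind : Integrable (s.indicator fun _ => (1 : ℝ)) μ := (integrable_const 1).indicator₀ hs
  have hg_bound : ∀ᵐ x ∂μ, ‖g x‖ ≤ 1 := .of_forall fun x => abs_sub_indicator_le_one (ha01 x) s x
  have hg_meas : AEStronglyMeasurable g μ := ha.sub hind.aestronglyMeasurable
  have hg : Integrable g μ := .of_bound hg_meas 1 hg_bound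
  have hg_integral : ∫ x, g x ∂μ = 0 := by
    have ha_int : Integrable a μ :=
      .of_bound ha 1 (.of_forall fun x => abs_le.mpr ⟨by linarith [(ha01 x).1], (ha01 x).2⟩)
    rw [integral_sub ha_int hind, integral_indicator₀ hs, setIntegral_const, smul_eq_mul, mul_one,
      hint, sub_self]
  have hgΨ : Integrable (fun x => g x * Ψ x) μ := hΨ.bdd_mul hg_meas hg_bound
  have hgΨc : Integrable (fun x => |g x| * |Ψ x - c|) μ :=
    (hΨ.sub (integrable_const c)).abs.bdd_mul hg.abs.aestronglyMeasurable (by simpa using hg_bound)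
  calc ∫ x, g x * Ψ x ∂μ = ∫ x, g x * (Ψ x - c) ∂μ := by
        simp_rw [mul_sub]
        rw [integral_sub hgΨ (hg.mul_const c), integral_mul_const, hg_integral, zero_mul, sub_zero]
    _ = -∫ x, |g x| * |Ψ x - c| ∂μ := by
        rw [← integral_neg]
        exact integral_congr_ae
          (.of_forall fun x => sub_indicator_mul_sub_eq_neg_abs_mul_abs (ha01 x))
    _ ≤ -((∫ x, |g x| ∂μ) ^ 2 / (4 * M)) :=
        neg_le_neg <| sq_div_le_integral_mul_of_measure_lt_le hM
          (hΨ.sub (integrable_const c)).abs.aestronglyMeasurable (fun _ => abs_nonneg _)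
          (fun _ => abs_nonneg _) (fun x => abs_sub_indicator_le_one (ha01 x) s x) hg.abs hgΨc
          hband
    _ = -(1 / (4 * M)) * (∫ x, |g x| ∂μ) ^ 2 := by ring

end BathtubQuantitative

theorem stmt_0_general {d : ℕ} (Ω : Set (Fin d → ℝ)) (hΩ : MeasurableSet Ω)
    (hfin : volume Ω < ⊤)
    (Ψ : (Fin d → ℝ) → ℝ) (hΨ : IntegrableOn Ψ Ω)
    (L : ℝ) (μstar : ℝ)
    (hmeasω : volume {x | x ∈ Ω ∧ μstar < Ψ x} = ENNReal.ofReal (L * (volume Ω).toReal))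
    (M : ℝ) (hM : 0 < M)
    (hband : ∀ δ : ℝ, 0 < δ → volume {x | x ∈ Ω ∧ |Ψ x - μstar| < δ} ≤ ENNReal.ofReal (M * δ))
    (a : (Fin d → ℝ) → ℝ) (ha_meas : Measurable a)
    (ha01 : ∀ x, a x ∈ Set.Icc (0:ℝ) 1)
    (haint : ∫ x in Ω, a x = L * (volume Ω).toReal) :
    ∫ x in Ω, (a x - Set.indicator {x | x ∈ Ω ∧ μstar < Ψ x} (fun _ => (1:ℝ)) x) * Ψ x ≤
      -(1/(4*M)) *
        (∫ x in Ω, |a x - Set.indicator {x | x ∈ Ω ∧ μstar < Ψ x} (fun _ => (1:ℝ)) x|)^2 := by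
  have : IsFiniteMeasure (volume.restrict Ω) := isFiniteMeasure_restrict.mpr hfin.ne
  have hind : EqOn ({x | x ∈ Ω ∧ μstar < Ψ x}.indicator fun _ => (1 : ℝ))
      ({x | μstar < Ψ x}.indicator fun _ => 1) Ω := fun x hx => by
    classical
    simp [indicator_apply, hx]
  have hLA : 0 ≤ L * (volume Ω).toReal := haint ▸ setIntegral_nonneg hΩ fun x _ => (ha01 x).1
  rw [setIntegral_congr_fun hΩ fun x hx => congrArg (fun t => (a x - t) * Ψ x) (hind hx),
    setIntegral_congr_fun hΩ fun x hx => congrArg (fun t => |a x - t|) (hind hx)]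
  refine integral_sub_indicator_mul_le hΨ ha_meas.aestronglyMeasurable ha01 ?_ hM fun δ hδ => ?_
  · rw [haint, measureReal_restrict_apply' hΩ, measureReal_def, inter_comm]
    exact (congrArg ENNReal.toReal hmeasω).trans (ENNReal.toReal_ofReal hLA) |>.symm
  · rw [Measure.restrict_apply' hΩ, inter_comm]
    exact hband δ hδ

theorem stmt_0 {d : ℕ} (Ω : Set (Fin d → ℝ)) (hΩ : MeasurableSet Ω)
    (hfin : volume Ω < ⊤) (hpos : 0 < volume Ω)
    (Ψ : (Fin d → ℝ) → ℝ) (hΨ : IntegrableOn Ψ Ω)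
    (L : ℝ) (hL : L ∈ Set.Ioo (0:ℝ) 1) (μstar : ℝ)
    (hmeasω : volume {x | x ∈ Ω ∧ μstar < Ψ x} = ENNReal.ofReal (L * (volume Ω).toReal))
    (M : ℝ) (hM : 0 < M)
    (hband : ∀ δ : ℝ, 0 < δ → volume {x | x ∈ Ω ∧ |Ψ x - μstar| < δ} ≤ ENNReal.ofReal (M * δ))
    (a : (Fin d → ℝ) → ℝ) (ha_meas : Measurable a)
    (ha01 : ∀ x, a x ∈ Set.Icc (0:ℝ) 1)
    (haint : ∫ x in Ω, a x = L * (volume Ω).toReal) :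
    ∫ x in Ω, (a x - Set.indicator {x | x ∈ Ω ∧ μstar < Ψ x} (fun _ => (1:ℝ)) x) * Ψ x ≤
      -(1/(4*M)) *
        (∫ x in Ω, |a x - Set.indicator {x | x ∈ Ω ∧ μstar < Ψ x} (fun _ => (1:ℝ)) x|)^2 :=
  stmt_0_general Ω hΩ hfin Ψ hΨ L μstar hmeasω M hM hband a ha_meas ha01 haint
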